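/- Let r be a positive integer and let a_T : (α1,α2) → (β1,β2) be an arrow of the Remmel–Whitney quiver that satisfies neither the r-th row rule nor the reverse r-th row rule. Then there exist arrows a_{T1} : (α1,α2) → (λ1,λ2) satisfying the r-th row rule and a_{T2} : (λ1,λ2) → (β1,β2) satisfying the reverse r-th row rule, such that T is the composition tableau of T1 and T2. -/

import Mathlib

/- Common combinatorial infrastructure: skew shapes, standard fillings,
   Remmel–Whitney sets, Littlewood–Richardson coefficients, Schur functions,
   the Remmel–Whitney quiver and its row-rule subquivers, jeu-de-taquin,
   infusion, RS correspondence and diffusion. -/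

open scoped Classical BigOperators

noncomputable section

/-- Pairs of partitions (vertices of the quivers). -/
abbrev PP := YoungDiagram × YoungDiagram

namespace RW

/-- Cells of the skew shape `ν/μ`. -/
def SkewCells (ν μ : YoungDiagram) : Finset (ℕ × ℕ) := ν.cells \ μ.cells

/-- `f` is a standard filling of the skew shape `ν/μ`: it vanishes off the skew cells,
restricts to a bijection from the skew cells to `{1, …, n}` where `n` is the number of cells,
and is strictly increasing along rows and down columns. -/
def IsStdFilling (ν μ : YoungDiagram) (f : ℕ × ℕ → ℕ) : Prop :=
  (∀ c, c ∉ SkewCells ν μ → f c = 0) ∧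
  Set.BijOn f (SkewCells ν μ : Set (ℕ × ℕ)) (Set.Icc 1 (SkewCells ν μ).card) ∧
  (∀ i j : ℕ, (i, j) ∈ SkewCells ν μ → (i, j + 1) ∈ SkewCells ν μ → f (i, j) < f (i, j + 1)) ∧
  (∀ i j : ℕ, (i, j) ∈ SkewCells ν μ → (i + 1, j) ∈ SkewCells ν μ → f (i, j) < f (i + 1, j))

/-- Position (cell) of the label `l` in a filling `f` (junk value if no such cell). -/
def posOf (f : ℕ × ℕ → ℕ) (l : ℕ) : ℕ × ℕ :=
  if h : ∃ c, f c = l then h.choose else (0, 0)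

/-- The reverse lexicographic filling of the skew shape `ν/μ`: the numbers `1, …, n` are
entered from right to left along rows, from top row to bottom row. -/
def rlFill (ν μ : YoungDiagram) : ℕ × ℕ → ℕ := fun c =>
  if c ∈ SkewCells ν μ then
    1 + ((SkewCells ν μ).filter (fun c' => c'.1 < c.1 ∨ (c'.1 = c.1 ∧ c.2 < c'.2))).card
  else 0

/-- The Remmel–Whitney set `RW_{ν/μ}(g1/g2)`: standard skew tableaux of shape `ν/μ` such that
(i) if `i+1` is immediately to the left of `i` in `rl(g1/g2)` (same row), then in `T` the label
`i+1` is strictly to the right of and weakly above `i`; (ii) if `i` is directly above `j` in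
`rl(g1/g2)`, then in `T` the label `j` is strictly below and weakly to the left of `i`. -/
def RWSet (ν μ g1 g2 : YoungDiagram) : Set (ℕ × ℕ → ℕ) :=
  {T | IsStdFilling ν μ T ∧
    (∀ i j : ℕ, (i, j) ∈ SkewCells g1 g2 → (i, j + 1) ∈ SkewCells g1 g2 →
      (posOf T (rlFill g1 g2 (i, j + 1))).2 < (posOf T (rlFill g1 g2 (i, j))).2 ∧
      (posOf T (rlFill g1 g2 (i, j))).1 ≤ (posOf T (rlFill g1 g2 (i, j + 1))).1) ∧
    (∀ i j : ℕ, (i, j) ∈ SkewCells g1 g2 → (i + 1, j) ∈ SkewCells g1 g2 →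
      (posOf T (rlFill g1 g2 (i, j))).1 < (posOf T (rlFill g1 g2 (i + 1, j))).1 ∧
      (posOf T (rlFill g1 g2 (i + 1, j))).2 ≤ (posOf T (rlFill g1 g2 (i, j))).2)}

/-! ### Littlewood–Richardson coefficients (via the classical LR rule) -/

/-- Semistandard filling of the skew shape `ν/μ` (positive entries, weakly increasing
along rows, strictly increasing down columns, zero off the shape). -/
def IsSSYT (ν μ : YoungDiagram) (f : ℕ × ℕ → ℕ) : Prop :=
  (∀ c, c ∉ SkewCells ν μ → f c = 0) ∧
  (∀ c ∈ SkewCells ν μ, 1 ≤ f c) ∧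
  (∀ i j : ℕ, (i, j) ∈ SkewCells ν μ → (i, j + 1) ∈ SkewCells ν μ → f (i, j) ≤ f (i, j + 1)) ∧
  (∀ i j : ℕ, (i, j) ∈ SkewCells ν μ → (i + 1, j) ∈ SkewCells ν μ → f (i, j) < f (i + 1, j))

/-- Cells weakly before `c` in the reverse reading order (right-to-left, top-to-bottom). -/
def prefixCells (ν μ : YoungDiagram) (c : ℕ × ℕ) : Finset (ℕ × ℕ) :=
  (SkewCells ν μ).filter (fun c' => c'.1 < c.1 ∨ (c'.1 = c.1 ∧ c.2 ≤ c'.2))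

/-- Number of entries equal to `k` among the cells `s`. -/
def cnt (f : ℕ × ℕ → ℕ) (s : Finset (ℕ × ℕ)) (k : ℕ) : ℕ :=
  (s.filter (fun c => f c = k)).card

/-- Littlewood–Richardson filling of `ν/μ` of content `β`: semistandard, content `β`,
and every prefix of the reverse reading word is a lattice word. -/
def IsLRFilling (ν μ β : YoungDiagram) (f : ℕ × ℕ → ℕ) : Prop :=
  IsSSYT ν μ f ∧
  (∀ k : ℕ, cnt f (SkewCells ν μ) (k + 1) = β.rowLen k) ∧
  (∀ c ∈ SkewCells ν μ, ∀ k : ℕ,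
    cnt f (prefixCells ν μ c) (k + 2) ≤ cnt f (prefixCells ν μ c) (k + 1))

/-- The Littlewood–Richardson coefficient `c^γ_{α β}` (structure constants of Schur
functions), defined by the Littlewood–Richardson rule. -/
def LRcoeff (γ α β : YoungDiagram) : ℕ :=
  Nat.card {f : ℕ × ℕ → ℕ // IsLRFilling γ α β f}

/-! ### The ring `Λ₁ ⊗ Λ₂` and Schur functions -/

/-- Elementary symmetric functions as the free generators of the ring of symmetric
functions `Λ = ℤ[e₁, e₂, …]`; the variable `X k` is `e_{k+1}`. -/
def eVar (k : ℤ) : MvPolynomial ℕ ℤ :=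
  if k = 0 then 1 else if 0 < k then MvPolynomial.X (k.toNat - 1) else 0

/-- The Schur function `s_λ ∈ Λ`, via the dual Jacobi–Trudi determinant. -/
def schurF (lam : YoungDiagram) : MvPolynomial ℕ ℤ :=
  Matrix.det (Matrix.of fun i j : Fin (lam.rowLen 0) =>
    eVar ((lam.colLen i : ℤ) + (j : ℤ) - (i : ℤ)))

/-- The ring `Λ₁ ⊗_ℤ Λ₂` of symmetric functions in two independent sets of variables. -/
abbrev SymAlg := MvPolynomial (ℕ ⊕ ℕ) ℤ

/-- `s_{α₁,α₂} = s_{α₁}(x) ⬝ s_{α₂}(y) ∈ Λ₁ ⊗ Λ₂`. -/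
def sP (v : PP) : SymAlg :=
  MvPolynomial.rename Sum.inl (schurF v.1) * MvPolynomial.rename Sum.inr (schurF v.2)

/-! ### The Remmel–Whitney quiver and row rules -/

/-- `T` indexes an arrow `a_T : v → u` of the Remmel–Whitney quiver `qRW`,
i.e. `T ∈ RW_{u₁/v₁}(v₂/u₂)` and the vertices are distinct (the quiver is graded
and homogeneous). -/
def IsQArrow (v u : PP) (T : ℕ × ℕ → ℕ) : Prop :=
  v ≠ u ∧ v.1.cells ⊆ u.1.cells ∧ u.2.cells ⊆ v.2.cells ∧
  (SkewCells u.1 v.1).card = (SkewCells v.2 u.2).card ∧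
  T ∈ RWSet u.1 v.1 v.2 u.2

/-- The `r`-th row rule filling entry of the (ambient) box `c`:
`r` in the top-left box, decreasing by 1 along rows, increasing by 1 down columns. -/
def rowRuleEntry (r : ℕ) (c : ℕ × ℕ) : ℤ := (r : ℤ) + (c.1 : ℤ) - (c.2 : ℤ)

/-- The `r`-th row rule for a tableau `T` governed by the skew shape `g1/g2`:
every label appears in `T` in its assigned minimum row or lower (rows are 1-indexed). -/
def RowCond (r : ℕ) (g1 g2 : YoungDiagram) (T : ℕ × ℕ → ℕ) : Prop :=
  ∀ c ∈ SkewCells g1 g2,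
    rowRuleEntry r c ≤ ((posOf T (rlFill g1 g2 c)).1 + 1 : ℤ)

/-- The reverse `r`-th row rule: every label appears strictly above its assigned row. -/
def RevRowCond (r : ℕ) (g1 g2 : YoungDiagram) (T : ℕ × ℕ → ℕ) : Prop :=
  ∀ c ∈ SkewCells g1 g2,
    ((posOf T (rlFill g1 g2 c)).1 + 1 : ℤ) < rowRuleEntry r c

/-- Arrows of `qRW` satisfying the `r`-th row rule (`Arr^{≤ r}`). -/
def IsArrLe (r : ℕ) (v u : PP) (T : ℕ × ℕ → ℕ) : Prop :=
  IsQArrow v u T ∧ RowCond r v.2 u.2 T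

/-- Arrows of `qRW` satisfying the reverse `r`-th row rule (`Arr^{> r}`). -/
def IsArrGt (r : ℕ) (v u : PP) (T : ℕ × ℕ → ℕ) : Prop :=
  IsQArrow v u T ∧ RevRowCond r v.2 u.2 T

/-- Alternative indexing (`Arr-bar`): an arrow `ā_T : v → u` for each
`T ∈ RW_{v₂/u₂}(u₁/v₁)`. -/
def IsBarQArrow (v u : PP) (T : ℕ × ℕ → ℕ) : Prop :=
  v ≠ u ∧ v.1.cells ⊆ u.1.cells ∧ u.2.cells ⊆ v.2.cells ∧
  (SkewCells u.1 v.1).card = (SkewCells v.2 u.2).card ∧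
  T ∈ RWSet v.2 u.2 u.1 v.1

/-- Row rule for `Arr-bar`: for every label `l` of `T`, the row-rule entry `R_l` of the
box of `v₂/u₂` occupied by `l` is at most the row `k_l` of `l` in `rl(u₁/v₁)`. -/
def BarRowCond (r : ℕ) (v u : PP) (T : ℕ × ℕ → ℕ) : Prop :=
  ∀ c ∈ SkewCells v.2 u.2,
    rowRuleEntry r c ≤ ((posOf (rlFill u.1 v.1) (T c)).1 + 1 : ℤ)

/-- Reverse row rule for `Arr-bar`: `R_l > k_l` for all labels `l`. -/
def BarRevRowCond (r : ℕ) (v u : PP) (T : ℕ × ℕ → ℕ) : Prop :=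
  ∀ c ∈ SkewCells v.2 u.2,
    ((posOf (rlFill u.1 v.1) (T c)).1 + 1 : ℤ) < rowRuleEntry r c

/-- `Arr-bar^{≤ r}`. -/
def IsBarArrLe (r : ℕ) (v u : PP) (T : ℕ × ℕ → ℕ) : Prop :=
  IsBarQArrow v u T ∧ BarRowCond r v u T

/-- `Arr-bar^{> r}`. -/
def IsBarArrGt (r : ℕ) (v u : PP) (T : ℕ × ℕ → ℕ) : Prop :=
  IsBarQArrow v u T ∧ BarRevRowCond r v u T

/-! ### Quiver bases of `Λ₁ ⊗ Λ₂` -/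

/-- Auxiliary (fuel) recursion for the Remmel–Whitney basis:
`w_v = s_v − Σ_{arrows a rooted at v} w_{t(a)}`.  Since every arrow strictly
decreases `|v₂|`, fuel `|v₂|` computes the basis. -/
def wAux : ℕ → PP → SymAlg
  | 0, v => sP v
  | m + 1, v =>
      sP v - ∑ᶠ u : PP, ∑ᶠ _T ∈ {T : ℕ × ℕ → ℕ | IsQArrow v u T}, wAux m u

/-- The Remmel–Whitney basis `w_{α₁,α₂}` of `Λ₁ ⊗ Λ₂`. -/
def wB (v : PP) : SymAlg := wAux v.2.card v

/-- Fuel recursion for the basis of the subquiver `qRW^r`. -/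
def tauAux (r : ℕ) : ℕ → PP → SymAlg
  | 0, v => sP v
  | m + 1, v =>
      sP v - ∑ᶠ u : PP, ∑ᶠ _T ∈ {T : ℕ × ℕ → ℕ | IsArrLe r v u T}, tauAux r m u

/-- The basis `τ^r_{α₁,α₂}` of `Λ₁ ⊗ Λ₂` attached to the subquiver `qRW^r`. -/
def tauB (r : ℕ) (v : PP) : SymAlg := tauAux r v.2.card v

/-- Fuel recursion for the `qRW^r` basis in the alternative (`Arr-bar`) indexing. -/
def tauBarAux (r : ℕ) : ℕ → PP → SymAlg
  | 0, v => sP v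
  | m + 1, v =>
      sP v - ∑ᶠ u : PP, ∑ᶠ _T ∈ {T : ℕ × ℕ → ℕ | IsBarArrLe r v u T}, tauBarAux r m u

/-- The basis `τ^r_{α₁,α₂}` of `Λ₁ ⊗ Λ₂` (alternative arrow indexing). -/
def tauBarB (r : ℕ) (v : PP) : SymAlg := tauBarAux r v.2.card v

end RW

namespace RW

/-! ### Jeu-de-taquin -/

/-- One jeu-de-taquin slide with the gap at `g`: repeatedly move into the gap the smaller
of the two labels to the right of and below the gap, until both are absent (fuel recursion).
Returns the new filling and the final position of the gap. -/
def slideFrom : ℕ → (ℕ × ℕ → ℕ) → ℕ × ℕ → ((ℕ × ℕ → ℕ) × (ℕ × ℕ))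
  | 0, f, g => (f, g)
  | n + 1, f, g =>
    if f (g.1, g.2 + 1) = 0 ∧ f (g.1 + 1, g.2) = 0 then (f, g)
    else
      let c : ℕ × ℕ :=
        if f (g.1 + 1, g.2) = 0 ∨ (f (g.1, g.2 + 1) ≠ 0 ∧ f (g.1, g.2 + 1) < f (g.1 + 1, g.2))
        then (g.1, g.2 + 1) else (g.1 + 1, g.2)
      slideFrom n (Function.update (Function.update f g (f c)) c 0) c

/-- A (not necessarily standard) skew tableau: an outer shape, an inner shape and a filling. -/
structure SkewT where
  outer : YoungDiagram
  inner : YoungDiagram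
  entry : ℕ × ℕ → ℕ

/-- A standard skew tableau. -/
def IsStdSkewT (S : SkewT) : Prop :=
  S.inner.cells ⊆ S.outer.cells ∧ IsStdFilling S.outer S.inner S.entry

/-- `S'` is obtained from `S` by a single jeu-de-taquin slide into an inner corner. -/
def JdtStep (S S' : SkewT) : Prop :=
  ∃ c : ℕ × ℕ, c ∈ S.inner.cells ∧ (c.1 + 1, c.2) ∉ S.inner.cells ∧
    (c.1, c.2 + 1) ∉ S.inner.cells ∧
    S'.entry = (slideFrom (S.outer.card + 1) S.entry c).1 ∧
    S'.inner.cells = S.inner.cells.erase c ∧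
    S'.outer.cells = S.outer.cells.erase (slideFrom (S.outer.card + 1) S.entry c).2

/-- Jeu-de-taquin equivalence: the equivalence relation generated by single slides
(this allows sequences of slides into inner or outer corners). -/
def JdtEquiv : SkewT → SkewT → Prop := Relation.EqvGen JdtStep

/-- Rectification: a straight-shape tableau obtained from `S` by a sequence of
jeu-de-taquin slides into inner corners (by the fundamental theorem it is unique
for standard skew tableaux). -/
def Rect (S : SkewT) : SkewT :=
  if h : ∃ S', Relation.ReflTransGen JdtStep S S' ∧ S'.inner.cells = ∅ then h.choose else S

/-- The Young diagram with cell set `s` (junk value `⊥` if `s` is not a lower set). -/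
def ofCells (s : Finset (ℕ × ℕ)) : YoungDiagram :=
  if h : IsLowerSet (s : Set (ℕ × ℕ)) then ⟨s, h⟩ else ⊥

/-- The restriction `T^{≤ k}` of a standard skew tableau to the labels `{1, …, k}`. -/
def splitLe (S : SkewT) (k : ℕ) : SkewT where
  outer := ofCells (S.inner.cells ∪
    S.outer.cells.filter (fun c => 1 ≤ S.entry c ∧ S.entry c ≤ k))
  inner := S.inner
  entry := fun c => if 1 ≤ S.entry c ∧ S.entry c ≤ k then S.entry c else 0

/-- The restriction `T^{> k}` of a standard skew tableau to the labels `{k+1, …, n}`,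
with all labels decreased by `k`. -/
def splitGt (S : SkewT) (k : ℕ) : SkewT where
  outer := S.outer
  inner := ofCells (S.inner.cells ∪
    S.outer.cells.filter (fun c => 1 ≤ S.entry c ∧ S.entry c ≤ k))
  entry := fun c => if k < S.entry c then S.entry c - k else 0

/-! ### Infusion -/

/-- Auxiliary recursion for infusion: perform jeu-de-taquin slides on the first component
into the boxes of `T1` in decreasing order of the labels of `T1`, recording in the second
component the vacated outer corners (the corner vacated while sliding into the box of `T1`
labeled `i` gets the label `i`). -/
def infuseAux (N : ℕ) (T1 : ℕ × ℕ → ℕ) :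
    ℕ → ((ℕ × ℕ → ℕ) × (ℕ × ℕ → ℕ)) → ((ℕ × ℕ → ℕ) × (ℕ × ℕ → ℕ))
  | 0, p => p
  | i + 1, p =>
    if ∃ c, T1 c = i + 1 then
      let res := slideFrom N p.1 (posOf T1 (i + 1))
      infuseAux N T1 i (res.1, Function.update p.2 res.2 (i + 1))
    else infuseAux N T1 i p

/-- Infusion of `T2` (the outer tableau) past `T1` (the inner tableau with `n` boxes):
the first component is `Slide_{T1}(T2)` and the second is `Slide^{T2}(T1)`. -/
def infuse (N n : ℕ) (T1 T2 : ℕ × ℕ → ℕ) : (ℕ × ℕ → ℕ) × (ℕ × ℕ → ℕ) :=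
  infuseAux N T1 n (T2, fun _ => 0)

/-! ### The star operation `α*β` (for possibly skew shapes) -/

/-- Outer shape of `lo * up` (`up` is placed above and entirely to the right of `lo`),
where `lo = lo₁/lo₂` and `up = up₁/up₂` are skew shapes. -/
def starOuter (lo1 lo2 up1 up2 : YoungDiagram) : YoungDiagram :=
  ofCells ((Finset.range (up1.colLen 0) ×ˢ Finset.range (lo1.rowLen 0)) ∪
    up1.cells.image (fun c => (c.1, c.2 + lo1.rowLen 0)) ∪
    lo1.cells.image (fun c => (c.1 + up1.colLen 0, c.2)))

/-- Inner shape of `lo * up`. -/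
def starInner (lo1 lo2 up1 up2 : YoungDiagram) : YoungDiagram :=
  ofCells ((Finset.range (up1.colLen 0) ×ˢ Finset.range (lo1.rowLen 0)) ∪
    up2.cells.image (fun c => (c.1, c.2 + lo1.rowLen 0)) ∪
    lo2.cells.image (fun c => (c.1 + up1.colLen 0, c.2)))

/-! ### Reading words, Robinson–Schensted and diffusion -/

/-- The reading word of a filling of the skew shape `ν/μ`: labels are read from top to
bottom and right to left. -/
def readingWordOf (ν : YoungDiagram) (f : ℕ × ℕ → ℕ) : List ℕ :=
  (List.range (ν.colLen 0)).flatMap (fun i =>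
    (((List.range (ν.rowLen i)).reverse).map (fun j => f (i, j))).filter (fun v => v != 0))

/-- The inverse of a permutation word (a word `w` listing `1, …, n` in some order). -/
def invWord (w : List ℕ) : List ℕ :=
  (List.range w.length).map (fun i => w.idxOf (i + 1) + 1)

/-- The filling of the skew shape `ν/μ` whose reading word is `w`. -/
def fillByWord (ν μ : YoungDiagram) (w : List ℕ) : ℕ × ℕ → ℕ := fun c =>
  if c ∈ SkewCells ν μ then w.getD (rlFill ν μ c - 1) 0 else 0

/-- Reverse column insertion: bump the value `v` leftwards through columns
`j-1, j-2, …, 0`, at each step replacing the largest entry smaller than the carried value;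
returns the final filling and the expelled letter. -/
def revBump (N : ℕ) : ℕ → (ℕ × ℕ → ℕ) → ℕ → ((ℕ × ℕ → ℕ) × ℕ)
  | 0, f, v => (f, v)
  | j + 1, f, v =>
    let s := (Finset.range N).filter (fun i => 0 < f (i, j) ∧ f (i, j) < v)
    if h : s.Nonempty then
      revBump N j (Function.update f (s.max' h, j) v) (f (s.max' h, j))
    else (f, v)

/-- The inverse Robinson–Schensted correspondence (via reverse column insertion):
given an insertion tableau `P` and a recording tableau `Q` with `m` labels, produce the word
`(a_1, …, a_m)`; the label `m` of `Q` is removed first, expelling `a_m`, and so on. -/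
def RSinvWord (N : ℕ) : ℕ → (ℕ × ℕ → ℕ) → (ℕ × ℕ → ℕ) → List ℕ
  | 0, _, _ => []
  | m + 1, P, Q =>
    if ∃ c, Q c = m + 1 then
      let c := posOf Q (m + 1)
      let rb := revBump N c.2 (Function.update P c 0) (P c)
      RSinvWord N m rb.1 Q ++ [rb.2]
    else RSinvWord N m P Q ++ [0]

/-- `θ⁻¹(P, Q)` for the skew shape `ν/μ`: the filling of `ν/μ` by the word `RS⁻¹(P, Q)`. -/
def thetaInv (ν μ : YoungDiagram) (P Q : ℕ × ℕ → ℕ) : ℕ × ℕ → ℕ :=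
  fillByWord ν μ (RSinvWord ((SkewCells ν μ).card + 1) (SkewCells ν μ).card P Q)

/-- The unique element of `RW(δ)` for a straight shape `δ`: row `i` carries the labels
`δ₁ + ⋯ + δ_i + 1, …, δ₁ + ⋯ + δ_{i+1}` in increasing order. -/
def uElem (δ : YoungDiagram) : ℕ × ℕ → ℕ := fun c =>
  if c ∈ δ.cells then (Finset.range c.1).sum δ.rowLen + c.2 + 1 else 0

/-! ### Vertical strips -/

/-- `ν/μ` is a vertical strip of length `q` (no two boxes in the same row). -/
def IsVStripOf (ν μ : YoungDiagram) (q : ℕ) : Prop :=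
  μ.cells ⊆ ν.cells ∧ (SkewCells ν μ).card = q ∧
  ∀ c ∈ SkewCells ν μ, ∀ c' ∈ SkewCells ν μ, c ≠ c' → c.1 ≠ c'.1

/-- The standard tableau `T_{ν/μ}` on a vertical strip `ν/μ`, labeled `1, …, q`
from top to bottom. -/
def vstripTab (ν μ : YoungDiagram) : ℕ × ℕ → ℕ := fun c =>
  if c ∈ SkewCells ν μ then 1 + ((SkewCells ν μ).filter (fun c' => c'.1 < c.1)).card else 0

/-- The column partition `1^p`. -/
def colDiagram (p : ℕ) : YoungDiagram :=
  ofCells (Finset.range p ×ˢ ({0} : Finset ℕ))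

/-! ### Diffusion and the arrows `Diff_T(a_U)` -/

/-- Given `T ∈ RW_γ(β*α₂)` and `U ∈ RW_{γ/λ₂}(λ₁/α₁)` (an arrow of `Arr-bar` rooted at
`(α₁,γ)`), the filling `W` of the skew shape `β*α₂` produced by diffusion: extend `U` by the
unique element of `RW(λ₂)` to a straight tableau `Ũ` of shape `γ` and apply `θ⁻¹(Ũ, T)`. -/
def diffFill (α2 β : YoungDiagram) (T U : ℕ × ℕ → ℕ) (lam2 : YoungDiagram) : ℕ × ℕ → ℕ :=
  let k := lam2.card
  let Ut : ℕ × ℕ → ℕ := fun c =>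
    if c ∈ lam2.cells then uElem lam2 c else if U c ≠ 0 then U c + k else 0
  thetaInv (starOuter β ⊥ α2 ⊥) (starInner β ⊥ α2 ⊥) Ut T

/-- The arrow `Diff_T(a_U)` rooted at `(α₁,α₂)` satisfies the reverse `r`-th row rule
(the trivial arrow counts as satisfying it, vacuously):
the part of `W^{> |λ₂|}` occupying the `α₂`-region of `β*α₂` defines a tableau of shape
`α₂/ν₂` (labels renumbered), governed by `ν₁/α₁`, and every label lies strictly above its
assigned row. -/
def DiffArrowRev (r : ℕ) (α1 α2 β : YoungDiagram) (T : ℕ × ℕ → ℕ) (u : PP)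
    (U : ℕ × ℕ → ℕ) : Prop :=
  let w0 := β.rowLen 0
  let k := u.2.card
  let W := diffFill α2 β T U u.2
  let A := (SkewCells (starOuter β ⊥ α2 ⊥) (starInner β ⊥ α2 ⊥)).filter
    (fun c => w0 ≤ c.2 ∧ k < W c)
  let L := A.image (fun c => W c - k)
  let ν1 := ofCells (α1.cells ∪ (SkewCells u.1 α1).filter (fun c => rlFill u.1 α1 c ∈ L))
  let V : ℕ × ℕ → ℕ := fun c =>
    if (c.1, c.2 + w0) ∈ A then (L.filter (fun x => x ≤ W (c.1, c.2 + w0) - k)).card else 0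
  ∀ c : ℕ × ℕ, (c.1, c.2 + w0) ∈ A →
    ((posOf (rlFill ν1 α1) (V c)).1 + 1 : ℤ) < rowRuleEntry r c

/-- The unique element of `RW_γ(1^p * α₂)` for `γ/α₂` a vertical strip: the `α₂`-cells
carry the unique element of `RW(α₂)` and the strip cells carry `|α₂| + T_{γ/α₂}`. -/
def starColTab (γ α2 : YoungDiagram) : ℕ × ℕ → ℕ := fun c =>
  if c ∈ α2.cells then uElem α2 c
  else if c ∈ SkewCells γ α2 then α2.card + vstripTab γ α2 c else 0

/-! ### Composition of arrows -/

/-- The composition tableau of `T1 ∈ RW_{λ₁/α₁}(α₂/λ₂)` and `T2 ∈ RW_{β₁/λ₁}(λ₂/β₂)`: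
a filling of `β₁/α₁`, where a box of `λ₁/α₁` with label `i` in `T1` receives the
`rl(α₂/β₂)`-label of the box of `α₂/λ₂` with `rl(α₂/λ₂)`-label `i`, and similarly for
boxes of `β₁/λ₁` using `T2` and `rl(λ₂/β₂)`. -/
def compTab (α1 lam1 β1 α2 lam2 β2 : YoungDiagram) (T1 T2 : ℕ × ℕ → ℕ) : ℕ × ℕ → ℕ :=
  fun c =>
    if c ∈ SkewCells lam1 α1 then rlFill α2 β2 (posOf (rlFill α2 lam2) (T1 c))
    else if c ∈ SkewCells β1 lam1 then rlFill α2 β2 (posOf (rlFill lam2 β2) (T2 c))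
    else 0

end RW

/-! The cells of `a2/b2` whose labels obey the `r`-th row rule in `T` form an upper set of
`a2/b2`, because the Remmel–Whitney conditions make the row defect (row of the label minus its
row-rule entry) monotone; removing them from `a2` gives `λ2`. The cells of `b1/a1` carrying
these labels form a lower set of `b1/a1`, because the row rule passes from a label to the
(smaller) label just left of or just above it; adding them to `a1` gives `λ1`. Restricting `T`
to `λ1/a1` and `b1/λ1` and relabelling through `rl(a2/λ2)` and `rl(λ2/b2)` gives the two
arrows, and both pieces are nonempty exactly because `T` obeys neither rule. -/

namespace RW

section Rank

variable {β α : Type*} [LinearOrder α] {f : β → α} {s : Finset β} {x y : β}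

lemma card_filter_lt_lt_of_lt (hx : x ∈ s) (h : f x < f y) :
    (s.filter (f · < f x)).card < (s.filter (f · < f y)).card :=
  Finset.card_lt_card <| (Finset.ssubset_iff_of_subset
    (Finset.monotone_filter_right _ fun _ _ hz => hz.trans h)).2
      ⟨x, by simp [hx, h], by simp⟩

lemma card_filter_lt_lt_iff (hx : x ∈ s) (hy : y ∈ s) :
    (s.filter (f · < f x)).card < (s.filter (f · < f y)).card ↔ f x < f y := by
  refine ⟨fun h => ?_, card_filter_lt_lt_of_lt hx⟩
  by_contra! hyx
  rcases hyx.lt_or_eq with hlt | heq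
  · exact (card_filter_lt_lt_of_lt hy hlt).asymm h
  · rw [heq] at h
    exact h.false

lemma card_filter_lt_lt_card (hx : x ∈ s) : (s.filter (f · < f x)).card < s.card :=
  Finset.card_lt_card (Finset.filter_ssubset.2 ⟨x, hx, lt_irrefl _⟩)

end Rank

/-- `rlFill` enumerates a skew shape increasingly in this linear order. -/
def readKey (c : ℕ × ℕ) : ℕ ×ₗ ℕᵒᵈ := toLex (c.1, OrderDual.toDual c.2)

lemma readKey_injective : Function.Injective readKey := fun c c' h => by
  simpa [readKey, Prod.ext_iff] using h

section RlFill

variable {ν μ : YoungDiagram} {c c' : ℕ × ℕ}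

lemma rlFill_of_mem (hc : c ∈ SkewCells ν μ) :
    rlFill ν μ c = ((SkewCells ν μ).filter (readKey · < readKey c)).card + 1 := by
  simp only [rlFill, if_pos hc, readKey, Prod.Lex.toLex_lt_toLex, OrderDual.toDual_lt_toDual,
    add_comm]

lemma rlFill_lt_rlFill_iff (hc : c ∈ SkewCells ν μ) (hc' : c' ∈ SkewCells ν μ) :
    rlFill ν μ c < rlFill ν μ c' ↔ readKey c < readKey c' := by
  rw [rlFill_of_mem hc, rlFill_of_mem hc', Nat.add_lt_add_iff_right]
  exact card_filter_lt_lt_iff hc hc'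

lemma rlFill_injOn : Set.InjOn (rlFill ν μ) (SkewCells ν μ) := fun _ hc _ hc' h =>
  readKey_injective <| le_antisymm
    (not_lt.1 fun hlt => ((rlFill_lt_rlFill_iff hc' hc).2 hlt).ne h.symm)
    (not_lt.1 fun hlt => ((rlFill_lt_rlFill_iff hc hc').2 hlt).ne h)

end RlFill

def IsLabelling (S : Finset (ℕ × ℕ)) (f : ℕ × ℕ → ℕ) : Prop :=
  (∀ c ∉ S, f c = 0) ∧ Set.BijOn f S (Set.Icc 1 S.card)

lemma IsStdFilling.isLabelling {ν μ : YoungDiagram} {f : ℕ × ℕ → ℕ}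
    (hf : IsStdFilling ν μ f) : IsLabelling (SkewCells ν μ) f :=
  ⟨hf.1, hf.2.1⟩

lemma isLabelling_rlFill (ν μ : YoungDiagram) : IsLabelling (SkewCells ν μ) (rlFill ν μ) := by
  have hmaps : Set.MapsTo (rlFill ν μ) (SkewCells ν μ) (Set.Icc 1 (SkewCells ν μ).card) :=
    fun c hc => by
      rw [rlFill_of_mem hc]
      exact ⟨by omega, card_filter_lt_lt_card hc⟩
  refine ⟨fun c hc => by simp [rlFill, hc], hmaps, rlFill_injOn, ?_⟩
  rw [← Finset.coe_Icc]
  exact Finset.surjOn_of_injOn_of_card_le _ (by rwa [Finset.coe_Icc]) rlFill_injOn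
    (by simp)

namespace IsLabelling

variable {S S' : Finset (ℕ × ℕ)} {f g : ℕ × ℕ → ℕ}

lemma posOf_apply (hf : IsLabelling S f) {c : ℕ × ℕ} (hc : c ∈ S) : posOf f (f c) = c := by
  have hex : ∃ c', f c' = f c := ⟨c, rfl⟩
  rw [posOf, dif_pos hex]
  have hlabel : 1 ≤ f c := (hf.2.mapsTo hc).1
  have hmem : hex.choose ∈ S := by
    by_contra h
    have := hex.choose_spec
    rw [hf.1 _ h] at this
    omega
  exact hf.2.injOn hmem hc hex.choose_spec

lemma posOf_mem (hf : IsLabelling S f) {l : ℕ} (hl : l ∈ Set.Icc 1 S.card) :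
    posOf f l ∈ S := by
  obtain ⟨c, hc, rfl⟩ := hf.2.surjOn hl
  rwa [hf.posOf_apply hc]

lemma apply_posOf (hf : IsLabelling S f) {l : ℕ} (hl : l ∈ Set.Icc 1 S.card) :
    f (posOf f l) = l := by
  obtain ⟨c, hc, rfl⟩ := hf.2.surjOn hl
  rw [hf.posOf_apply hc]

variable (hf : IsLabelling S f) (hg : IsLabelling S' g) (hcard : S.card = S'.card)
include hf hg hcard

lemma mapsTo_posOf_comp : Set.MapsTo (posOf g ∘ f) S S' := fun _ hc =>
  hg.posOf_mem (hcard ▸ hf.2.mapsTo hc)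

lemma leftInvOn_posOf_comp : Set.LeftInvOn (posOf f ∘ g) (posOf g ∘ f) S := fun _ hc => by
  simp only [Function.comp_apply]
  rw [hg.apply_posOf (hcard ▸ hf.2.mapsTo hc), hf.posOf_apply hc]

end IsLabelling

section SkewShape

variable {ν μ : YoungDiagram}

lemma mem_skewCells_of_le_of_le {a b c : ℕ × ℕ} (ha : a ∈ SkewCells ν μ)
    (hc : c ∈ SkewCells ν μ) (hab : a ≤ b) (hbc : b ≤ c) : b ∈ SkewCells ν μ := by
  simp only [SkewCells, Finset.mem_sdiff] at ha hc ⊢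
  exact ⟨ν.isLowerSet hbc hc.1, fun hb => ha.2 (μ.isLowerSet hab hb)⟩

/-- A skew shape contains a lattice path between any two of its comparable cells. -/
lemma monotoneOn_skewCells_of_succ {α : Type*} [Preorder α] {g : ℕ × ℕ → α}
    (hrow : ∀ i j, (i, j) ∈ SkewCells ν μ → (i, j + 1) ∈ SkewCells ν μ → g (i, j) ≤ g (i, j + 1))
    (hcol : ∀ i j, (i, j) ∈ SkewCells ν μ → (i + 1, j) ∈ SkewCells ν μ → g (i, j) ≤ g (i + 1, j)) :
    MonotoneOn g (SkewCells ν μ) := by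
  suffices h : ∀ n, ∀ a ∈ SkewCells ν μ, ∀ c ∈ SkewCells ν μ, a ≤ c →
      c.1 + c.2 = a.1 + a.2 + n → g a ≤ g c by
    intro a ha c hc hac
    exact h (c.1 + c.2 - (a.1 + a.2)) a ha c hc hac (by have := hac.1; have := hac.2; omega)
  intro n
  induction n with
  | zero =>
    intro a _ c _ ⟨h1, h2⟩ hn
    obtain rfl : a = c := Prod.ext (by omega) (by omega)
    exact le_rfl
  | succ n ih =>
    rintro a ha ⟨i, j⟩ hc ⟨hai, haj⟩ hn
    dsimp only at hai haj hn
    rcases Nat.lt_or_ge a.2 j with hj | hj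
    · obtain ⟨j, rfl⟩ : ∃ j', j = j' + 1 := ⟨j - 1, by omega⟩
      have hprev : (i, j) ∈ SkewCells ν μ :=
        mem_skewCells_of_le_of_le ha hc (Prod.mk_le_mk.2 ⟨hai, by omega⟩) (by simp)
      exact (ih a ha _ hprev (Prod.mk_le_mk.2 ⟨hai, by omega⟩) (by omega)).trans
        (hrow i j hprev hc)
    · obtain ⟨i, rfl⟩ : ∃ i', i = i' + 1 := ⟨i - 1, by omega⟩
      have hprev : (i, j) ∈ SkewCells ν μ :=
        mem_skewCells_of_le_of_le ha hc (Prod.mk_le_mk.2 ⟨by omega, haj⟩) (by simp)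
      exact (ih a ha _ hprev (Prod.mk_le_mk.2 ⟨by omega, haj⟩) (by omega)).trans
        (hcol i j hprev hc)

end SkewShape

def rowDefect (r : ℕ) (g1 g2 : YoungDiagram) (T : ℕ × ℕ → ℕ) (d : ℕ × ℕ) : ℤ :=
  ((posOf T (rlFill g1 g2 d)).1 + 1 : ℤ) - rowRuleEntry r d

def rowRuleCells (r : ℕ) (g1 g2 : YoungDiagram) (T : ℕ × ℕ → ℕ) : Finset (ℕ × ℕ) :=
  (SkewCells g1 g2).filter (0 ≤ rowDefect r g1 g2 T ·)

lemma rowRuleCells_nonempty {r : ℕ} {g1 g2 : YoungDiagram} {T : ℕ × ℕ → ℕ}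
    (h : ¬ RevRowCond r g1 g2 T) : (rowRuleCells r g1 g2 T).Nonempty := by
  simp only [RevRowCond, not_forall, not_lt] at h
  obtain ⟨d, hd, hle⟩ := h
  exact ⟨d, Finset.mem_filter.2 ⟨hd, sub_nonneg.2 hle⟩⟩

lemma sdiff_rowRuleCells_nonempty {r : ℕ} {g1 g2 : YoungDiagram} {T : ℕ × ℕ → ℕ}
    (h : ¬ RowCond r g1 g2 T) : (SkewCells g1 g2 \ rowRuleCells r g1 g2 T).Nonempty := by
  simp only [RowCond, not_forall, not_le] at h
  obtain ⟨d, hd, hlt⟩ := h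
  refine ⟨d, Finset.mem_sdiff.2 ⟨hd, fun hgood => ?_⟩⟩
  exact (sub_neg.2 hlt).not_ge (Finset.mem_filter.1 hgood).2

section RemmelWhitney

variable {r : ℕ} {a1 a2 b1 b2 : YoungDiagram} {T : ℕ × ℕ → ℕ}

lemma rowDefect_monotoneOn (hT : T ∈ RWSet b1 a1 a2 b2) :
    MonotoneOn (rowDefect r a2 b2 T) (SkewCells a2 b2) := by
  refine monotoneOn_skewCells_of_succ (fun i j h h' => ?_) (fun i j h h' => ?_)
  · have := (hT.2.1 i j h h').2
    simp only [rowDefect, rowRuleEntry]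
    push_cast
    omega
  · have := (hT.2.2 i j h h').1
    simp only [rowDefect, rowRuleEntry]
    push_cast
    omega

lemma col_posOf_lt_of_le (hT : T ∈ RWSet b1 a1 a2 b2) {d' d : ℕ × ℕ}
    (hd' : d' ∈ SkewCells a2 b2) (hd : d ∈ SkewCells a2 b2) (hle : d' ≤ d) (hlt : d'.2 < d.2) :
    (posOf T (rlFill a2 b2 d)).2 < (posOf T (rlFill a2 b2 d')).2 := by
  have hmono : MonotoneOn (fun d => -((d.2 + (posOf T (rlFill a2 b2 d)).2 : ℕ) : ℤ))
      (SkewCells a2 b2) := by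
    refine monotoneOn_skewCells_of_succ (fun i j h h' => ?_) (fun i j h h' => ?_)
    · have := (hT.2.1 i j h h').1
      push_cast
      omega
    · have := (hT.2.2 i j h h').2
      push_cast
      omega
  have := hmono hd' hd hle
  dsimp only at this
  omega

/-- If `d'` lies in an earlier row and strictly left of `d`, the Remmel–Whitney conditions
put its label strictly right of that of `d`; otherwise the row-rule entry of `d'` is smaller
than that of `d`. -/
lemma rowDefect_nonneg_of_rlFill_lt (hT : T ∈ RWSet b1 a1 a2 b2) {d' d : ℕ × ℕ}
    (hd' : d' ∈ SkewCells a2 b2) (hd : d ∈ SkewCells a2 b2)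
    (hlt : rlFill a2 b2 d' < rlFill a2 b2 d)
    (hcol : (posOf T (rlFill a2 b2 d')).2 ≤ (posOf T (rlFill a2 b2 d)).2)
    (hrow : (posOf T (rlFill a2 b2 d)).1 ≤ (posOf T (rlFill a2 b2 d')).1 + 1)
    (h : 0 ≤ rowDefect r a2 b2 T d) : 0 ≤ rowDefect r a2 b2 T d' := by
  rw [rlFill_lt_rlFill_iff hd' hd, readKey, readKey, Prod.Lex.toLex_lt_toLex,
    OrderDual.toDual_lt_toDual] at hlt
  have hcol' : d.2 ≤ d'.2 := by
    by_contra! hlt'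
    rcases hlt with hrow' | ⟨-, hlt''⟩
    · exact (col_posOf_lt_of_le hT hd' hd ⟨hrow'.le, hlt'.le⟩ hlt').not_ge hcol
    · omega
  simp only [rowDefect, rowRuleEntry] at h ⊢
  omega

variable (hT : T ∈ RWSet b1 a1 a2 b2) (hcard : (SkewCells b1 a1).card = (SkewCells a2 b2).card)
include hT hcard

lemma mapsTo_posOf_rlFill_comp :
    Set.MapsTo (posOf (rlFill a2 b2) ∘ T) (SkewCells b1 a1) (SkewCells a2 b2) :=
  hT.1.isLabelling.mapsTo_posOf_comp (isLabelling_rlFill a2 b2) hcard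

lemma leftInvOn_posOf_rlFill_comp :
    Set.LeftInvOn (posOf T ∘ rlFill a2 b2) (posOf (rlFill a2 b2) ∘ T) (SkewCells b1 a1) :=
  hT.1.isLabelling.leftInvOn_posOf_comp (isLabelling_rlFill a2 b2) hcard

lemma mapsTo_posOf_comp_rlFill :
    Set.MapsTo (posOf T ∘ rlFill a2 b2) (SkewCells a2 b2) (SkewCells b1 a1) :=
  (isLabelling_rlFill a2 b2).mapsTo_posOf_comp hT.1.isLabelling hcard.symm

lemma leftInvOn_posOf_comp_rlFill :
    Set.LeftInvOn (posOf (rlFill a2 b2) ∘ T) (posOf T ∘ rlFill a2 b2) (SkewCells a2 b2) :=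
  (isLabelling_rlFill a2 b2).leftInvOn_posOf_comp hT.1.isLabelling hcard.symm

lemma rlFill_posOf_rlFill {c : ℕ × ℕ} (hc : c ∈ SkewCells b1 a1) :
    rlFill a2 b2 (posOf (rlFill a2 b2) (T c)) = T c :=
  (isLabelling_rlFill a2 b2).apply_posOf (hcard ▸ hT.1.2.1.mapsTo hc)

lemma posOf_rlFill_mem_rowRuleCells_of_lt {c' c : ℕ × ℕ} (hc' : c' ∈ SkewCells b1 a1)
    (hc : c ∈ SkewCells b1 a1) (hlt : T c' < T c) (hcol : c'.2 ≤ c.2) (hrow : c.1 ≤ c'.1 + 1)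
    (h : posOf (rlFill a2 b2) (T c) ∈ rowRuleCells r a2 b2 T) :
    posOf (rlFill a2 b2) (T c') ∈ rowRuleCells r a2 b2 T := by
  have hd' := mapsTo_posOf_rlFill_comp hT hcard hc'
  have hd := mapsTo_posOf_rlFill_comp hT hcard hc
  have hpos' := leftInvOn_posOf_rlFill_comp hT hcard hc'
  have hpos := leftInvOn_posOf_rlFill_comp hT hcard hc
  simp only [Function.comp_apply] at hd' hd hpos' hpos
  refine Finset.mem_filter.2 ⟨hd', rowDefect_nonneg_of_rlFill_lt hT hd' hd ?_ ?_ ?_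
    (Finset.mem_filter.1 h).2⟩
  · rwa [rlFill_posOf_rlFill hT hcard hc', rlFill_posOf_rlFill hT hcard hc]
  · rwa [hpos', hpos]
  · rwa [hpos', hpos]

lemma posOf_rlFill_mem_rowRuleCells_of_le {c' c : ℕ × ℕ} (hc' : c' ∈ SkewCells b1 a1)
    (hc : c ∈ SkewCells b1 a1) (hle : c' ≤ c)
    (h : posOf (rlFill a2 b2) (T c) ∈ rowRuleCells r a2 b2 T) :
    posOf (rlFill a2 b2) (T c') ∈ rowRuleCells r a2 b2 T := by
  -- monotonicity in `Prop`, where `≤` is implication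
  have hmono : MonotoneOn (fun c => posOf (rlFill a2 b2) (T c) ∉ rowRuleCells r a2 b2 T)
      (SkewCells b1 a1) :=
    monotoneOn_skewCells_of_succ
      (fun i j h h' hbad hgood => hbad <| posOf_rlFill_mem_rowRuleCells_of_lt hT hcard h h'
        (hT.1.2.2.1 i j h h') (by simp) (by simp) hgood)
      (fun i j h h' hbad hgood => hbad <| posOf_rlFill_mem_rowRuleCells_of_lt hT hcard h h'
        (hT.1.2.2.2 i j h h') le_rfl le_rfl hgood)
  by_contra hbad
  exact hmono hc' hc hle hbad h

end RemmelWhitney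

lemma ofCells_cells {s : Finset (ℕ × ℕ)} (h : IsLowerSet (s : Set (ℕ × ℕ))) :
    (ofCells s).cells = s := by
  rw [ofCells, dif_pos h]

def lam2 (r : ℕ) (a2 b2 : YoungDiagram) (T : ℕ × ℕ → ℕ) : YoungDiagram :=
  ofCells (a2.cells \ rowRuleCells r a2 b2 T)

def lam1 (r : ℕ) (a1 a2 b1 b2 : YoungDiagram) (T : ℕ × ℕ → ℕ) : YoungDiagram :=
  ofCells (a1.cells ∪
    (SkewCells b1 a1).filter (fun c => posOf (rlFill a2 b2) (T c) ∈ rowRuleCells r a2 b2 T))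

section Split

variable {r : ℕ} {a1 a2 b1 b2 : YoungDiagram} {T : ℕ × ℕ → ℕ}

lemma lam2_cells (hT : T ∈ RWSet b1 a1 a2 b2) :
    (lam2 r a2 b2 T).cells = a2.cells \ rowRuleCells r a2 b2 T := by
  refine ofCells_cells fun c c' hle hc => ?_
  simp only [Finset.coe_sdiff, Set.mem_sdiff, Finset.mem_coe] at hc ⊢
  refine ⟨a2.isLowerSet hle hc.1, fun hgood' => hc.2 ?_⟩
  obtain ⟨hd', hdefect'⟩ := Finset.mem_filter.1 hgood'
  have hd : c ∈ SkewCells a2 b2 := Finset.mem_sdiff.2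
    ⟨hc.1, fun hb => (Finset.mem_sdiff.1 hd').2 (b2.isLowerSet hle hb)⟩
  exact Finset.mem_filter.2 ⟨hd, hdefect'.trans (rowDefect_monotoneOn hT hd' hd hle)⟩

lemma lam1_cells (hT : T ∈ RWSet b1 a1 a2 b2)
    (hcard : (SkewCells b1 a1).card = (SkewCells a2 b2).card) :
    (lam1 r a1 a2 b1 b2 T).cells = a1.cells ∪
      (SkewCells b1 a1).filter
        (fun c => posOf (rlFill a2 b2) (T c) ∈ rowRuleCells r a2 b2 T) := by
  refine ofCells_cells fun c c' hle hc => ?_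
  simp only [Finset.coe_union, Set.mem_union, Finset.mem_coe, Finset.mem_filter] at hc ⊢
  by_cases ha : c' ∈ a1.cells
  · exact Or.inl ha
  rcases hc with hc | ⟨hc, hgood⟩
  · exact absurd (a1.isLowerSet hle hc) ha
  · have hc' : c' ∈ SkewCells b1 a1 :=
      Finset.mem_sdiff.2 ⟨b1.isLowerSet hle (Finset.mem_sdiff.1 hc).1, ha⟩
    exact Or.inr ⟨hc', posOf_rlFill_mem_rowRuleCells_of_le hT hcard hc' hc hle hgood⟩

lemma skewCells_a2_lam2 (hT : T ∈ RWSet b1 a1 a2 b2) :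
    SkewCells a2 (lam2 r a2 b2 T) = rowRuleCells r a2 b2 T := by
  rw [SkewCells, lam2_cells hT, sdiff_sdiff_right_self, Finset.inf_eq_inter,
    Finset.inter_eq_right]
  exact (Finset.filter_subset _ _).trans Finset.sdiff_subset

lemma skewCells_lam2_b2 (hT : T ∈ RWSet b1 a1 a2 b2) :
    SkewCells (lam2 r a2 b2 T) b2 = SkewCells a2 b2 \ rowRuleCells r a2 b2 T := by
  rw [SkewCells, lam2_cells hT, SkewCells, sdiff_right_comm]

lemma lam2_subset (hT : T ∈ RWSet b1 a1 a2 b2) : (lam2 r a2 b2 T).cells ⊆ a2.cells := by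
  rw [lam2_cells hT]
  exact Finset.sdiff_subset

lemma cells_subset_lam2 (hT : T ∈ RWSet b1 a1 a2 b2) (h : b2.cells ⊆ a2.cells) :
    b2.cells ⊆ (lam2 r a2 b2 T).cells := by
  rw [lam2_cells hT]
  exact fun c hc => Finset.mem_sdiff.2
    ⟨h hc, fun hgood => (Finset.mem_sdiff.1 (Finset.mem_filter.1 hgood).1).2 hc⟩

variable (hT : T ∈ RWSet b1 a1 a2 b2) (hcard : (SkewCells b1 a1).card = (SkewCells a2 b2).card)
include hT hcard

lemma skewCells_lam1_a1 : SkewCells (lam1 r a1 a2 b1 b2 T) a1 =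
    (SkewCells b1 a1).filter
      (fun c => posOf (rlFill a2 b2) (T c) ∈ SkewCells a2 (lam2 r a2 b2 T)) := by
  rw [skewCells_a2_lam2 hT, SkewCells, lam1_cells hT hcard, Finset.union_sdiff_left,
    Finset.sdiff_eq_self_of_disjoint]
  exact Finset.disjoint_of_subset_left (Finset.filter_subset _ _) Finset.sdiff_disjoint

lemma skewCells_b1_lam1 : SkewCells b1 (lam1 r a1 a2 b1 b2 T) =
    (SkewCells b1 a1).filter
      (fun c => posOf (rlFill a2 b2) (T c) ∈ SkewCells (lam2 r a2 b2 T) b2) := by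
  have hmaps := mapsTo_posOf_rlFill_comp hT hcard
  rw [skewCells_lam2_b2 hT]
  ext c
  have := @hmaps c
  simp only [SkewCells, lam1_cells hT hcard, Finset.mem_sdiff, Finset.mem_union, Finset.mem_filter,
    Finset.mem_coe, Function.comp_apply] at this ⊢
  tauto

lemma cells_subset_lam1 : a1.cells ⊆ (lam1 r a1 a2 b1 b2 T).cells := by
  rw [lam1_cells hT hcard]
  exact Finset.subset_union_left

lemma lam1_subset (h : a1.cells ⊆ b1.cells) : (lam1 r a1 a2 b1 b2 T).cells ⊆ b1.cells := by
  rw [lam1_cells hT hcard]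
  exact Finset.union_subset h ((Finset.filter_subset _ _).trans Finset.sdiff_subset)

end Split

/-- Undoes the relabelling of `compTab`: a label `l` of `T` on `ν/μ` becomes the
`rl(γ/δ)`-label of the cell carrying the `rl(a2/b2)`-label `l`. -/
def restrictTab (a2 b2 γ δ ν μ : YoungDiagram) (T : ℕ × ℕ → ℕ) : ℕ × ℕ → ℕ := fun c =>
  if c ∈ SkewCells ν μ then rlFill γ δ (posOf (rlFill a2 b2) (T c)) else 0

lemma restrictTab_of_mem {a2 b2 γ δ ν μ : YoungDiagram} {T : ℕ × ℕ → ℕ} {c : ℕ × ℕ}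
    (hc : c ∈ SkewCells ν μ) :
    restrictTab a2 b2 γ δ ν μ T c = rlFill γ δ (posOf (rlFill a2 b2) (T c)) :=
  if_pos hc

section Restrict

variable {r : ℕ} {a1 a2 b1 b2 γ δ ν μ : YoungDiagram} {T : ℕ × ℕ → ℕ}
  (hT : T ∈ RWSet b1 a1 a2 b2) (hcard : (SkewCells b1 a1).card = (SkewCells a2 b2).card)
  (hG : SkewCells γ δ ⊆ SkewCells a2 b2)
  (hS : SkewCells ν μ =
    (SkewCells b1 a1).filter (fun c => posOf (rlFill a2 b2) (T c) ∈ SkewCells γ δ))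

include hS in
lemma mem_skewCells_iff {c : ℕ × ℕ} : c ∈ SkewCells ν μ ↔
    c ∈ SkewCells b1 a1 ∧ posOf (rlFill a2 b2) (T c) ∈ SkewCells γ δ := by
  rw [hS, Finset.mem_filter]

include hT hcard hS

lemma rlFill_posOf_restrictTab {c : ℕ × ℕ} (hc : c ∈ SkewCells ν μ) :
    rlFill a2 b2 (posOf (rlFill γ δ) (restrictTab a2 b2 γ δ ν μ T c)) = T c := by
  obtain ⟨hc1, hc2⟩ := (mem_skewCells_iff hS).1 hc
  rw [restrictTab_of_mem hc, (isLabelling_rlFill γ δ).posOf_apply hc2,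
    rlFill_posOf_rlFill hT hcard hc1]

include hG

lemma bijOn_posOf_rlFill_comp :
    Set.BijOn (posOf (rlFill a2 b2) ∘ T) (SkewCells ν μ) (SkewCells γ δ) := by
  refine ⟨fun c hc => ((mem_skewCells_iff hS).1 hc).2,
    ((leftInvOn_posOf_rlFill_comp hT hcard).mono
      fun c hc => ((mem_skewCells_iff hS).1 hc).1).injOn,
    fun d hd => ⟨_, ?_, leftInvOn_posOf_comp_rlFill hT hcard (hG hd)⟩⟩
  refine (mem_skewCells_iff hS).2 ⟨mapsTo_posOf_comp_rlFill hT hcard (hG hd), ?_⟩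
  rwa [← Function.comp_apply (f := posOf (rlFill a2 b2)) (g := T),
    leftInvOn_posOf_comp_rlFill hT hcard (hG hd)]

lemma card_skewCells_eq_of_restrict : (SkewCells ν μ).card = (SkewCells γ δ).card :=
  have hbij := bijOn_posOf_rlFill_comp hT hcard hG hS
  Finset.card_nbij _ hbij.mapsTo hbij.injOn hbij.surjOn

lemma restrictTab_lt_restrictTab {c c' : ℕ × ℕ} (hc : c ∈ SkewCells ν μ)
    (hc' : c' ∈ SkewCells ν μ) (hlt : T c < T c') :
    restrictTab a2 b2 γ δ ν μ T c < restrictTab a2 b2 γ δ ν μ T c' := by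
  have hd := (bijOn_posOf_rlFill_comp hT hcard hG hS).mapsTo hc
  have hd' := (bijOn_posOf_rlFill_comp hT hcard hG hS).mapsTo hc'
  simp only [Function.comp_apply] at hd hd'
  rwa [restrictTab_of_mem hc, restrictTab_of_mem hc', rlFill_lt_rlFill_iff hd hd',
    ← rlFill_lt_rlFill_iff (hG hd) (hG hd'),
    rlFill_posOf_rlFill hT hcard ((mem_skewCells_iff hS).1 hc).1,
    rlFill_posOf_rlFill hT hcard ((mem_skewCells_iff hS).1 hc').1]

lemma isStdFilling_restrictTab : IsStdFilling ν μ (restrictTab a2 b2 γ δ ν μ T) := by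
  have hsub : ∀ {c}, c ∈ SkewCells ν μ → c ∈ SkewCells b1 a1 :=
    fun hc => ((mem_skewCells_iff hS).1 hc).1
  refine ⟨fun c hc => if_neg hc, ?_,
    fun i j h h' => restrictTab_lt_restrictTab hT hcard hG hS h h'
      (hT.1.2.2.1 i j (hsub h) (hsub h')),
    fun i j h h' => restrictTab_lt_restrictTab hT hcard hG hS h h'
      (hT.1.2.2.2 i j (hsub h) (hsub h'))⟩
  rw [card_skewCells_eq_of_restrict hT hcard hG hS]
  exact ((isLabelling_rlFill γ δ).2.comp (bijOn_posOf_rlFill_comp hT hcard hG hS)).congr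
    fun c hc => (restrictTab_of_mem hc).symm

lemma posOf_restrictTab {d : ℕ × ℕ} (hd : d ∈ SkewCells γ δ) :
    posOf (restrictTab a2 b2 γ δ ν μ T) (rlFill γ δ d) = posOf T (rlFill a2 b2 d) := by
  obtain ⟨c, hc, rfl⟩ := (bijOn_posOf_rlFill_comp hT hcard hG hS).surjOn hd
  have hinv : posOf T (rlFill a2 b2 ((posOf (rlFill a2 b2) ∘ T) c)) = c :=
    leftInvOn_posOf_rlFill_comp hT hcard ((mem_skewCells_iff hS).1 hc).1
  rw [hinv, Function.comp_apply, ← restrictTab_of_mem hc]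
  exact (isStdFilling_restrictTab hT hcard hG hS).isLabelling.posOf_apply hc

lemma restrictTab_mem_RWSet : restrictTab a2 b2 γ δ ν μ T ∈ RWSet ν μ γ δ := by
  refine ⟨isStdFilling_restrictTab hT hcard hG hS, fun i j h h' => ?_, fun i j h h' => ?_⟩
  · rw [posOf_restrictTab hT hcard hG hS h, posOf_restrictTab hT hcard hG hS h']
    exact hT.2.1 i j (hG h) (hG h')
  · rw [posOf_restrictTab hT hcard hG hS h, posOf_restrictTab hT hcard hG hS h']
    exact hT.2.2 i j (hG h) (hG h')

lemma isQArrow_restrictTab (hμν : μ.cells ⊆ ν.cells) (hδγ : δ.cells ⊆ γ.cells)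
    (hne : (SkewCells γ δ).Nonempty) : IsQArrow (μ, γ) (ν, δ) (restrictTab a2 b2 γ δ ν μ T) := by
  refine ⟨fun h => ?_, hμν, hδγ, card_skewCells_eq_of_restrict hT hcard hG hS,
    restrictTab_mem_RWSet hT hcard hG hS⟩
  obtain ⟨d, hd⟩ := hne
  rw [show γ = δ from congrArg Prod.snd h, SkewCells, Finset.sdiff_self] at hd
  exact Finset.notMem_empty d hd

lemma rowCond_restrictTab_iff : RowCond r γ δ (restrictTab a2 b2 γ δ ν μ T) ↔
    ∀ d ∈ SkewCells γ δ, 0 ≤ rowDefect r a2 b2 T d :=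
  forall₂_congr fun d hd => by rw [rowDefect, posOf_restrictTab hT hcard hG hS hd, sub_nonneg]

lemma revRowCond_restrictTab_iff : RevRowCond r γ δ (restrictTab a2 b2 γ δ ν μ T) ↔
    ∀ d ∈ SkewCells γ δ, rowDefect r a2 b2 T d < 0 :=
  forall₂_congr fun d hd => by rw [rowDefect, posOf_restrictTab hT hcard hG hS hd, sub_neg]

end Restrict

lemma eq_compTab_restrictTab {a1 a2 b1 b2 l1 l2 : YoungDiagram} {T : ℕ × ℕ → ℕ}
    (hT : T ∈ RWSet b1 a1 a2 b2) (hcard : (SkewCells b1 a1).card = (SkewCells a2 b2).card)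
    (hS1 : SkewCells l1 a1 =
      (SkewCells b1 a1).filter (fun c => posOf (rlFill a2 b2) (T c) ∈ SkewCells a2 l2))
    (hS2 : SkewCells b1 l1 =
      (SkewCells b1 a1).filter (fun c => posOf (rlFill a2 b2) (T c) ∈ SkewCells l2 b2)) :
    T = compTab a1 l1 b1 a2 l2 b2 (restrictTab a2 b2 a2 l2 l1 a1 T)
      (restrictTab a2 b2 l2 b2 b1 l1 T) := by
  funext c
  unfold compTab
  split_ifs with h1 h2
  · exact (rlFill_posOf_restrictTab hT hcard hS1 h1).symm
  · exact (rlFill_posOf_restrictTab hT hcard hS2 h2).symm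
  · refine hT.1.1 c fun hc => ?_
    simp only [SkewCells, Finset.mem_sdiff] at h1 h2 hc
    tauto

section Splitting

variable {r : ℕ} {a1 a2 b1 b2 : YoungDiagram} {T : ℕ × ℕ → ℕ}
  (hT : IsQArrow (a1, a2) (b1, b2) T)
include hT

lemma isArrLe_restrictTab_lam (hne : (rowRuleCells r a2 b2 T).Nonempty) :
    IsArrLe r (a1, a2) (lam1 r a1 a2 b1 b2 T, lam2 r a2 b2 T)
      (restrictTab a2 b2 a2 (lam2 r a2 b2 T) (lam1 r a1 a2 b1 b2 T) a1 T) := by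
  obtain ⟨-, -, -, hcard, hRW⟩ := hT
  have hG : SkewCells a2 (lam2 r a2 b2 T) ⊆ SkewCells a2 b2 := by
    rw [skewCells_a2_lam2 hRW]
    exact Finset.filter_subset _ _
  have hS := skewCells_lam1_a1 (r := r) hRW hcard
  refine ⟨isQArrow_restrictTab hRW hcard hG hS (cells_subset_lam1 hRW hcard) (lam2_subset hRW)
    (by rwa [skewCells_a2_lam2 hRW]), (rowCond_restrictTab_iff hRW hcard hG hS).2 ?_⟩
  rw [skewCells_a2_lam2 hRW]
  exact fun d hd => (Finset.mem_filter.1 hd).2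

lemma isArrGt_restrictTab_lam (hne : (SkewCells a2 b2 \ rowRuleCells r a2 b2 T).Nonempty) :
    IsArrGt r (lam1 r a1 a2 b1 b2 T, lam2 r a2 b2 T) (b1, b2)
      (restrictTab a2 b2 (lam2 r a2 b2 T) b2 b1 (lam1 r a1 a2 b1 b2 T) T) := by
  obtain ⟨-, ha, hb, hcard, hRW⟩ := hT
  have hG : SkewCells (lam2 r a2 b2 T) b2 ⊆ SkewCells a2 b2 := by
    rw [skewCells_lam2_b2 hRW]
    exact Finset.sdiff_subset
  have hS := skewCells_b1_lam1 (r := r) hRW hcard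
  refine ⟨isQArrow_restrictTab hRW hcard hG hS (lam1_subset hRW hcard ha)
    (cells_subset_lam2 hRW hb) (by rwa [skewCells_lam2_b2 hRW]),
    (revRowCond_restrictTab_iff hRW hcard hG hS).2 ?_⟩
  rw [skewCells_lam2_b2 hRW]
  intro d hd
  obtain ⟨hd, hbad⟩ := Finset.mem_sdiff.1 hd
  exact not_le.1 fun h => hbad (Finset.mem_filter.2 ⟨hd, h⟩)

lemma eq_compTab_restrictTab_lam :
    T = compTab a1 (lam1 r a1 a2 b1 b2 T) b1 a2 (lam2 r a2 b2 T) b2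
      (restrictTab a2 b2 a2 (lam2 r a2 b2 T) (lam1 r a1 a2 b1 b2 T) a1 T)
      (restrictTab a2 b2 (lam2 r a2 b2 T) b2 b1 (lam1 r a1 a2 b1 b2 T) T) :=
  eq_compTab_restrictTab hT.2.2.2.2 hT.2.2.2.1 (skewCells_lam1_a1 hT.2.2.2.2 hT.2.2.2.1)
    (skewCells_b1_lam1 hT.2.2.2.2 hT.2.2.2.1)

end Splitting

end RW

open RW in
theorem arrow_splitting_general (r : ℕ) (a1 a2 b1 b2 : YoungDiagram)
    (T : ℕ × ℕ → ℕ) (hT : IsQArrow (a1, a2) (b1, b2) T)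
    (hnot1 : ¬ RowCond r a2 b2 T) (hnot2 : ¬ RevRowCond r a2 b2 T) :
    ∃ (l1 l2 : YoungDiagram) (T1 T2 : ℕ × ℕ → ℕ),
      IsArrLe r (a1, a2) (l1, l2) T1 ∧ IsArrGt r (l1, l2) (b1, b2) T2 ∧
      T = compTab a1 l1 b1 a2 l2 b2 T1 T2 :=
  ⟨_, _, _, _, isArrLe_restrictTab_lam hT (rowRuleCells_nonempty hnot2),
    isArrGt_restrictTab_lam hT (sdiff_rowRuleCells_nonempty hnot1), eq_compTab_restrictTab_lam hT⟩

open RW in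
/-- An arrow of the Remmel–Whitney quiver satisfying neither the
`r`-th row rule nor the reverse `r`-th row rule splits as the composition of an arrow
satisfying the row rule followed by an arrow satisfying the reverse row rule. -/
theorem arrow_splitting (r : ℕ) (hr : 0 < r) (a1 a2 b1 b2 : YoungDiagram)
    (T : ℕ × ℕ → ℕ) (hT : IsQArrow (a1, a2) (b1, b2) T)
    (hnot1 : ¬ RowCond r a2 b2 T) (hnot2 : ¬ RevRowCond r a2 b2 T) :
    ∃ (l1 l2 : YoungDiagram) (T1 T2 : ℕ × ℕ → ℕ),
      IsArrLe r (a1, a2) (l1, l2) T1 ∧ IsArrGt r (l1, l2) (b1, b2) T2 ∧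
      T = compTab a1 l1 b1 a2 l2 b2 T1 T2 :=
  arrow_splitting_general r a1 a2 b1 b2 T hT hnot1 hnot2

end
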